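/- For tagged trees w_1 = c_1^A(w_{1,1},...,w_{1,p}) and w_2 = c_2^B(w_{2,1},...,w_{2,q}), define w_1 * w_2 to be c_1^{A∩B}(w_{1,1}*w_{2,1}, ..., w_{1,p}*w_{2,p}) when c_1 = c_2 (so p = q), and c_1^{(A∩B)\{∘}}(w_{1,1},...,w_{1,p}) otherwise. Then ℓ(w_1 * w_2) = ℓ(w_1) ∩ ℓ(w_2). -/

import Mathlib

/-- Linear expressions over `n` variables: trees built from variables `x i` and
constructor applications `c(e₁,...,e_k)` (constructors named by naturals). -/
inductive LinExpr (n : ℕ) : Type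
  | var : Fin n → LinExpr n
  | cons : ℕ → List (LinExpr n) → LinExpr n

/-- Tagged trees (ℓ-values): each node carries a constructor symbol and a tag,
a finite subset of `{∘, 1, ..., n}` modelled as `Finset (Option (Fin n))`
(`none` playing the role of `∘`). -/
inductive TaggedTree (n : ℕ) : Type
  | node : ℕ → Finset (Option (Fin n)) → List (TaggedTree n) → TaggedTree n

/-- Membership in the set `ℓ(w)` of linear expressions extracted from a tagged tree:
`ℓ(c^A(w₁,...,w_k)) = {x i | i ∈ A} ∪ ({c(e₁,...,e_k) | e_i ∈ ℓ(w_i)} if ∘ ∈ A else ∅)`. -/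
inductive EllMem {n : ℕ} : LinExpr n → TaggedTree n → Prop
  | var {i : Fin n} {c A ws} (hi : some i ∈ A) :
      EllMem (.var i) (.node c A ws)
  | cons {c A ws es} (hc : none ∈ A) (hes : List.Forall₂ EllMem es ws) :
      EllMem (.cons c es) (.node c A ws)

/-- The set `ℓ(w)` of linear expressions extracted from a tagged tree `w`. -/
def ell {n : ℕ} (w : TaggedTree n) : Set (LinExpr n) := {e | EllMem e w}

mutual
/-- The intersection operation `w₁ * w₂` on tagged trees:
`c₁^A(w₁s) * c₂^B(w₂s)` is `c₁^{A∩B}(zipWith (*) w₁s w₂s)` when `c₁ = c₂`,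
and `c₁^{(A∩B)\{∘}}(w₁s)` otherwise. -/
def star {n : ℕ} : TaggedTree n → TaggedTree n → TaggedTree n
  | .node c₁ A ws₁, .node c₂ B ws₂ =>
      if c₁ = c₂ then .node c₁ (A ∩ B) (starList ws₁ ws₂)
      else .node c₁ ((A ∩ B).erase none) ws₁

/-- Pointwise `star` on lists (i.e. `List.zipWith star`). -/
def starList {n : ℕ} : List (TaggedTree n) → List (TaggedTree n) → List (TaggedTree n)
  | w₁ :: t₁, w₂ :: t₂ => star w₁ w₂ :: starList t₁ t₂
  | _, _ => []
end

/-- Well-formedness with respect to an arity assignment `ar`: every node labeled `c`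
has exactly `ar c` children.  In particular, any two well-formed trees with equal
constructors at the root have equal arity. -/
inductive TreeWF {n : ℕ} (ar : ℕ → ℕ) : TaggedTree n → Prop
  | node {c A ws} (hlen : ws.length = ar c) (hws : ∀ w ∈ ws, TreeWF ar w) :
      TreeWF ar (.node c A ws)

/-! Induction on the well-formedness of `w₁`. At a node, `x i` lies on either side iff
`i ∈ A ∩ B`. A term `c(e₁,…,e_k)` needs both roots labelled `c`: in `ℓ(w₁) ∩ ℓ(w₂)` by definition,
in `ℓ(w₁ * w₂)` because otherwise `∘` is erased from the tag. With equal roots the arities agree,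
so the children of `w₁ * w₂` pair up with those of `w₁` and `w₂` and the claim follows childwise. -/

theorem List.forall₂_zipWith_iff {α β γ δ : Type*} {R : δ → γ → Prop} {S : δ → α → Prop}
    {T : δ → β → Prop} {f : α → β → γ} :
    ∀ {l₁ : List α} {l₂ : List β}, l₁.length = l₂.length →
      (∀ a ∈ l₁, ∀ b ∈ l₂, ∀ x, R x (f a b) ↔ S x a ∧ T x b) →
      ∀ xs, List.Forall₂ R xs (List.zipWith f l₁ l₂) ↔
        List.Forall₂ S xs l₁ ∧ List.Forall₂ T xs l₂
  | [], [], _, _, xs => by cases xs <;> simp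
  | a :: l₁, b :: l₂, hlen, hf, [] => by simp
  | a :: l₁, b :: l₂, hlen, hf, x :: xs => by
    have ih := List.forall₂_zipWith_iff (l₁ := l₁) (l₂ := l₂) (by simpa using hlen)
      (fun a' ha b' hb => hf a' (by simp [ha]) b' (by simp [hb])) xs
    simp only [List.zipWith_cons_cons, List.forall₂_cons, ih,
      hf a (by simp) b (by simp) x]
    tauto

theorem starList_eq_zipWith {n : ℕ} :
    ∀ ws₁ ws₂ : List (TaggedTree n), starList ws₁ ws₂ = List.zipWith star ws₁ ws₂
  | _ :: _, _ :: _ => by simp [starList, starList_eq_zipWith]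
  | [], _ => by simp [starList]
  | _ :: _, [] => by simp [starList]

theorem star_node {n : ℕ} (c₁ c₂ : ℕ) (A B : Finset (Option (Fin n)))
    (ws₁ ws₂ : List (TaggedTree n)) :
    star (.node c₁ A ws₁) (.node c₂ B ws₂) =
      if c₁ = c₂ then .node c₁ (A ∩ B) (List.zipWith star ws₁ ws₂)
      else .node c₁ ((A ∩ B).erase none) ws₁ := by
  rw [_root_.star, starList_eq_zipWith]

theorem ellMem_var_node_iff {n : ℕ} {i : Fin n} {c : ℕ} {A : Finset (Option (Fin n))}
    {ws : List (TaggedTree n)} : EllMem (.var i) (.node c A ws) ↔ some i ∈ A :=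
  ⟨fun | .var hi => hi, .var⟩

theorem ellMem_cons_node_iff {n : ℕ} {d c : ℕ} {es : List (LinExpr n)}
    {A : Finset (Option (Fin n))} {ws : List (TaggedTree n)} :
    EllMem (.cons d es) (.node c A ws) ↔ d = c ∧ none ∈ A ∧ List.Forall₂ EllMem es ws :=
  ⟨fun | .cons hc hes => ⟨rfl, hc, hes⟩, fun ⟨hd, hc, hes⟩ => hd ▸ .cons hc hes⟩

theorem ellMem_star_iff {n : ℕ} {ar : ℕ → ℕ} {w₁ w₂ : TaggedTree n}
    (h₁ : TreeWF ar w₁) (h₂ : TreeWF ar w₂) (e : LinExpr n) :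
    EllMem e (star w₁ w₂) ↔ EllMem e w₁ ∧ EllMem e w₂ := by
  induction h₁ generalizing w₂ e with
  | @node c₁ A ws₁ hlen₁ _ ih =>
    obtain ⟨hlen₂, hws₂⟩ := h₂
    rw [star_node]
    split_ifs with hc
    · subst hc
      have hchildren := List.forall₂_zipWith_iff (f := star) (hlen₁.trans hlen₂.symm)
        fun a ha b hb => ih a ha (hws₂ b hb)
      cases e with
      | var i => simp [ellMem_var_node_iff]
      | cons d es =>
        simp only [ellMem_cons_node_iff, Finset.mem_inter, hchildren]
        tauto
    · cases e with
      | var i => simp [ellMem_var_node_iff]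
      | cons d es =>
        refine iff_of_false (by simp [ellMem_cons_node_iff]) fun ⟨he₁, he₂⟩ => hc ?_
        exact (ellMem_cons_node_iff.1 he₁).1.symm.trans (ellMem_cons_node_iff.1 he₂).1

/-- For well-formed tagged trees `w₁` and `w₂`, `ℓ(w₁ * w₂) = ℓ(w₁) ∩ ℓ(w₂)`. -/
theorem ell_star {n : ℕ} (ar : ℕ → ℕ) (w₁ w₂ : TaggedTree n)
    (h₁ : TreeWF ar w₁) (h₂ : TreeWF ar w₂) :
    ell (star w₁ w₂) = ell w₁ ∩ ell w₂ :=
  Set.ext (ellMem_star_iff h₁ h₂)
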